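/- Let k be a field and let E be an associative unital k-algebra (not assumed finite-dimensional) which is finitely generated as a k-algebra. Let e_1, …, e_m be a complete system of orthogonal idempotents of E, i.e. e_i e_j = 0 for i ≠ j, e_i² = e_i, and e_1 + ⋯ + e_m = 1. If for every i the vector space e_i E e_i is finite-dimensional over k, then E is finite-dimensional over k. -/

import Mathlib

/-!
Pick a finite-dimensional subspace `P ∋ 1` generating `E`. Every `e_i x e_j` is a combination of
products along walks `i = v₀ → v₁ → ⋯ → vₙ = j` with factors in `e_{v_r} P e_{v_{r+1}}`. As in
Kleene's algorithm, admit the vertices as interior vertices one at a time: a walk through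
`{w} ∪ L` splits at its first and last visit to `w` into a walk through `L`, an element of the
corner `e_w E e_w`, and a walk through `L`. The corners being finite-dimensional, induction shows
that all these spans are finite-dimensional, and once every vertex is admitted they exhaust
`e_i E e_j`.
-/

open Submodule

namespace Peirce

variable {k E ι : Type*} [CommSemiring k] [Semiring E] [Algebra k E] {e : ι → E}

variable (k e) in
def proj (i j : ι) : E →ₗ[k] E :=
  (LinearMap.mulRight k (e j)).comp (LinearMap.mulLeft k (e i))

@[simp]
lemma proj_apply (i j : ι) (x : E) : proj k e i j x = e i * x * e j := rfl

variable (k e) in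
def component (i j : ι) : Submodule k E := LinearMap.range (proj k e i j)

lemma component_mul_component_le (i j l : ι) :
    component k e i j * component k e j l ≤ component k e i l := by
  rw [mul_le]
  rintro _ ⟨x, rfl⟩ _ ⟨y, rfl⟩
  exact ⟨x * e j * (e j * y), by simp only [proj_apply, mul_assoc]⟩

lemma idem_mem_component {i : ι} (hi : IsIdempotentElem (e i)) : e i ∈ component k e i i :=
  ⟨e i, by simp only [proj_apply, hi.eq]⟩

lemma le_mul_component {i j : ι} (hj : IsIdempotentElem (e j)) {X : Submodule k E}
    (hX : X ≤ component k e i j) : X ≤ X * component k e j j := fun x hx => by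
  obtain ⟨y, rfl⟩ := hX hx
  simpa [mul_assoc, hj.eq] using mul_mem_mul hx (idem_mem_component (k := k) hj)

lemma le_component_mul {i j : ι} (hi : IsIdempotentElem (e i)) {X : Submodule k E}
    (hX : X ≤ component k e i j) : X ≤ component k e i i * X := fun x hx => by
  obtain ⟨y, rfl⟩ := hX hx
  simpa [← mul_assoc, hi.eq] using mul_mem_mul (idem_mem_component (k := k) hi) hx

/-- Spanned by the products along walks from `i` to `j` with arrows in `e_a P e_b` whose interior
vertices lie in `l`, where each visit to an interior vertex `w` may insert a factor from the
corner `e_w E e_w`. -/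
def walkSpan (e : ι → E) (P : Submodule k E) : List ι → ι → ι → Submodule k E
  | [], i, j => P.map (proj k e i j)
  | w :: l, i, j =>
    walkSpan e P l i j ⊔ walkSpan e P l i w * component k e w w * walkSpan e P l w j

variable {P : Submodule k E}

lemma walkSpan_le_component (l : List ι) (i j : ι) :
    walkSpan e P l i j ≤ component k e i j := by
  induction l generalizing i j with
  | nil => exact LinearMap.map_le_range
  | cons w l ih =>
    refine sup_le (ih i j) ?_
    calc walkSpan e P l i w * component k e w w * walkSpan e P l w j
        ≤ component k e i w * component k e w w * component k e w j := by gcongr <;> apply ih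
      _ ≤ component k e i j := by
        grw [component_mul_component_le, component_mul_component_le]

lemma walkSpan_nil_le (l : List ι) (i j : ι) : walkSpan e P [] i j ≤ walkSpan e P l i j := by
  induction l with
  | nil => rfl
  | cons w l ih => exact ih.trans le_sup_left

lemma walkSpan_fg (hP : P.FG) (hC : ∀ v, (component k e v v).FG) (l : List ι) (i j : ι) :
    (walkSpan e P l i j).FG := by
  induction l generalizing i j with
  | nil => exact hP.map _
  | cons w l ih => exact (ih i j).sup (((ih i w).mul (hC w)).mul (ih w j))

lemma walkSpan_mul_walkSpan_le (he : ∀ i, IsIdempotentElem (e i)) {l : List ι} {v : ι}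
    (hv : v ∈ l) (i j : ι) : walkSpan e P l i v * walkSpan e P l v j ≤ walkSpan e P l i j := by
  induction l generalizing i j with
  | nil => simp at hv
  | cons w l ih =>
    set X := walkSpan e P l
    set C := component k e w w
    have hCC : C * C ≤ C := component_mul_component_le w w w
    have hCXC : C * X w w * C ≤ C := by
      grw [show X w w ≤ C from walkSpan_le_component l w w, hCC, hCC]
    show (X i v ⊔ X i w * C * X w v) * (X v j ⊔ X v w * C * X w j) ≤ X i j ⊔ X i w * C * X w j
    rcases List.mem_cons.mp hv with rfl | hv
    · have hXC : X v v ≤ C := walkSpan_le_component l v v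
      have hL : X i v ⊔ X i v * C * X v v ≤ X i v * C := by
        refine sup_le (le_mul_component (he v) (walkSpan_le_component l i v)) ?_
        grw [hXC, mul_assoc, hCC]
      have hR : X v j ⊔ X v v * C * X v j ≤ C * X v j := by
        refine sup_le (le_component_mul (he v) (walkSpan_le_component l v j)) ?_
        grw [hXC, hCC]
      grw [hL, hR, mul_assoc, ← mul_assoc C, hCC, ← mul_assoc]
      exact le_sup_right
    · simp only [Submodule.mul_sup, Submodule.sup_mul]
      refine sup_le (sup_le (le_sup_of_le_left (ih hv i j)) ?_) (sup_le ?_ ?_) <;>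
        refine le_sup_of_le_right ?_
      · calc X i w * C * X w v * X v j = X i w * C * (X w v * X v j) := by simp only [mul_assoc]
          _ ≤ X i w * C * X w j := by grw [ih hv]
      · calc X i v * (X v w * C * X w j) = X i v * X v w * C * X w j := by simp only [mul_assoc]
          _ ≤ X i w * C * X w j := by grw [ih hv]
      · calc X i w * C * X w v * (X v w * C * X w j)
            = X i w * (C * (X w v * X v w) * C) * X w j := by simp only [mul_assoc]
          _ ≤ X i w * C * X w j := by grw [ih hv, hCXC]

variable [Fintype ι]

lemma sum_proj_mul_proj (he : ∀ i, IsIdempotentElem (e i)) (hsum : ∑ v, e v = 1)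
    (i j : ι) (x y : E) : ∑ v, (e i * x * e v) * (e v * y * e j) = e i * (x * y) * e j := by
  calc ∑ v, (e i * x * e v) * (e v * y * e j) = ∑ v, e i * x * e v * y * e j := by
        refine Finset.sum_congr rfl fun v _ => ?_
        simp only [← mul_assoc]
        rw [mul_assoc (e i * x) (e v) (e v), (he v).eq]
    _ = e i * x * (∑ v, e v) * y * e j := by simp only [Finset.mul_sum, Finset.sum_mul]
    _ = e i * (x * y) * e j := by rw [hsum, mul_one, mul_assoc (e i)]

lemma sum_sum_proj (hsum : ∑ v, e v = 1) (x : E) : ∑ i, ∑ j, e i * x * e j = x := by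
  simp only [← Finset.mul_sum, ← Finset.sum_mul, hsum, one_mul, mul_one]

lemma proj_mem_walkSpan (he : ∀ i, IsIdempotentElem (e i)) (hsum : ∑ v, e v = 1) (h1 : 1 ∈ P)
    {l : List ι} (hl : ∀ v, v ∈ l) {x : E} (hx : x ∈ Algebra.adjoin k (P : Set E)) :
    ∀ i j, e i * x * e j ∈ walkSpan e P l i j := by
  induction hx using Algebra.adjoin_induction with
  | mem x hx => exact fun i j => walkSpan_nil_le l i j (mem_map_of_mem (f := proj k e i j) hx)
  | algebraMap r =>
    intro i j
    rw [Algebra.algebraMap_eq_smul_one, mul_smul_comm, smul_mul_assoc]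
    exact smul_mem _ r (walkSpan_nil_le l i j (mem_map_of_mem (f := proj k e i j) h1))
  | add x y _ _ hx hy =>
    intro i j
    rw [mul_add, add_mul]
    exact add_mem (hx i j) (hy i j)
  | mul x y _ _ hx hy =>
    intro i j
    rw [← sum_proj_mul_proj he hsum]
    exact sum_mem fun v _ =>
      walkSpan_mul_walkSpan_le he (hl v) i j (mul_mem_mul (hx i v) (hy v j))

theorem finite_of_fg_component_self (he : ∀ i, IsIdempotentElem (e i)) (hsum : ∑ v, e v = 1)
    (hP : P.FG) (h1 : 1 ∈ P) (hgen : Algebra.adjoin k (P : Set E) = ⊤)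
    (hC : ∀ v, (component k e v v).FG) : Module.Finite k E := by
  let l := (Finset.univ : Finset ι).toList
  have hl : ∀ v, v ∈ l := fun v => Finset.mem_toList.mpr (Finset.mem_univ v)
  have htop : ⊤ ≤ ⨆ i, ⨆ j, walkSpan e P l i j := fun x _ => by
    rw [← sum_sum_proj hsum x]
    exact sum_mem fun i _ => sum_mem fun j _ => mem_iSup_of_mem i (mem_iSup_of_mem j
      (proj_mem_walkSpan he hsum h1 hl (hgen ▸ Algebra.mem_top) i j))
  rw [Module.finite_def, ← top_le_iff.mp htop]
  exact fg_iSup _ fun i => fg_iSup _ fun j => walkSpan_fg hP hC l i j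

end Peirce

theorem stmt_3_general (k : Type*) [Field k] (E : Type*) [Ring E] [Algebra k E]
    (hfg : Algebra.FiniteType k E)
    (m : ℕ) (e : Fin m → E)
    (hidem : ∀ i, e i * e i = e i)
    (hsum : ∑ i, e i = 1)
    (hfin : ∀ i, FiniteDimensional k
      (LinearMap.range ((LinearMap.mulRight k (e i)).comp (LinearMap.mulLeft k (e i))))) :
    FiniteDimensional k E := by
  obtain ⟨S, hS⟩ := hfg.out
  have hgen : Algebra.adjoin k (span k (insert 1 (S : Set E)) : Set E) = ⊤ :=
    top_le_iff.mp (hS ▸ Algebra.adjoin_mono (subset_span.trans' (Set.subset_insert 1 _)))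
  exact Peirce.finite_of_fg_component_self hidem hsum (fg_span (S.finite_toSet.insert 1))
    (subset_span (Set.mem_insert 1 _)) hgen fun v => Module.Finite.iff_fg.mp (hfin v)

/--
STATEMENT 3: Let `k` be a field and let `E` be an associative unital `k`-algebra (not assumed
finite-dimensional) which is finitely generated as a `k`-algebra.  Let `e_1, …, e_m` be a
complete system of orthogonal idempotents of `E`.  If for every `i` the vector space
`e_i E e_i` is finite-dimensional over `k`, then `E` is finite-dimensional over `k`.

The subspace `e_i E e_i` is formalized as the range of the `k`-linear map `y ↦ e_i * y * e_i`.
-/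
theorem stmt_3 (k : Type*) [Field k] (E : Type*) [Ring E] [Algebra k E]
    (hfg : Algebra.FiniteType k E)
    (m : ℕ) (e : Fin m → E)
    (horth : ∀ i j, i ≠ j → e i * e j = 0)
    (hidem : ∀ i, e i * e i = e i)
    (hsum : ∑ i, e i = 1)
    (hfin : ∀ i, FiniteDimensional k
      (LinearMap.range ((LinearMap.mulRight k (e i)).comp (LinearMap.mulLeft k (e i))))) :
    FiniteDimensional k E :=
  stmt_3_general k E hfg m e hidem hsum hfin
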